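/- arXiv:2307.16334 — 2 statements merged into one kernel-verified Lean document; each statement's English description precedes it below -/
import Mathlib

section
/- The (n₁+m₁+n₂+m₂)×(n₁+m₁+n₂+m₂) coefficient matrix of the block Schwarz system (with block rows and columns ordered as (u_{Ω1}, u_{Γ1}, u_{Ω2}, u_{Γ2})) is invertible if and only if the (m₁+m₂)×(m₁+m₂) interface matrix with block form [[I_{m₁}, B₁],[B₂, I_{m₂}]] is invertible, and this holds if and only if the m₁×m₁ matrix I_{m₁} − B₁B₂ is invertible. -/
/-!
Eliminating the first subdomain (Schur complement of the invertible block `[[A_Ω1, A_Γ1], [0, I]]`)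
and then `A_Ω2` (matrix determinant lemma) gives `det S = det A_Ω1 * det A_Ω2 * det M`.
The two Schur complements of the identity blocks of `M` show `det M = det (I - B₁ B₂)`.
-/

open Matrix

namespace Matrix

variable {α : Type*} [CommRing α] {n₁ n₂ m₁ m₂ : Type*}
  [Fintype n₁] [Fintype n₂] [Fintype m₁] [Fintype m₂]
  [DecidableEq n₁] [DecidableEq n₂] [DecidableEq m₁] [DecidableEq m₂]

def blockSchwarz (A₁ : Matrix n₁ n₁ α) (C₁ : Matrix n₁ m₁ α) (A₂ : Matrix n₂ n₂ α)
    (C₂ : Matrix n₂ m₂ α) (R₂₁ : Matrix m₁ n₂ α) (R₁₂ : Matrix m₂ n₁ α) :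
    Matrix ((n₁ ⊕ m₁) ⊕ (n₂ ⊕ m₂)) ((n₁ ⊕ m₁) ⊕ (n₂ ⊕ m₂)) α :=
  fromBlocks (fromBlocks A₁ C₁ 0 1) (fromBlocks 0 0 (-R₂₁) 0)
    (fromBlocks 0 0 (-R₁₂) 0) (fromBlocks A₂ C₂ 0 1)

theorem det_blockSchwarz {A₁ : Matrix n₁ n₁ α} {A₂ : Matrix n₂ n₂ α}
    (hA₁ : IsUnit A₁.det) (hA₂ : IsUnit A₂.det) (C₁ : Matrix n₁ m₁ α) (C₂ : Matrix n₂ m₂ α)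
    (R₂₁ : Matrix m₁ n₂ α) (R₁₂ : Matrix m₂ n₁ α) :
    (blockSchwarz A₁ C₁ A₂ C₂ R₂₁ R₁₂).det =
      A₁.det * A₂.det * (fromBlocks 1 (R₂₁ * A₂⁻¹ * C₂) (R₁₂ * A₁⁻¹ * C₁) 1).det := by
  have := A₁.invertibleOfIsUnitDet hA₁
  have : Invertible (1 : Matrix m₁ m₁ α) := invertibleOne
  have := fromBlocksZero₂₁Invertible A₁ C₁ (1 : Matrix m₁ m₁ α)
  rw [blockSchwarz, det_fromBlocks₁₁, invOf_fromBlocks_zero₂₁_eq, det_fromBlocks_zero₂₁, det_one,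
    mul_one]
  -- the Schur complement reduces to `fromBlocks A₂ C₂ (R₁₂ * A₁⁻¹ * C₁ * R₂₁) 1`
  simp only [fromBlocks_multiply, invOf_one, Matrix.mul_zero, Matrix.zero_mul, Matrix.mul_one,
    Matrix.neg_mul, Matrix.mul_neg, neg_neg, zero_add, add_zero, neg_zero, sub_eq_add_neg,
    fromBlocks_neg, fromBlocks_add]
  rw [det_fromBlocks_one₂₂, sub_eq_add_neg, ← Matrix.mul_neg, det_add_mul _ _ hA₂,
    det_fromBlocks_one₁₁]
  simp only [invOf_eq_nonsing_inv, Matrix.neg_mul, Matrix.mul_assoc, mul_assoc, sub_eq_add_neg]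

end Matrix

theorem block_schwarz_matrix_invertible_iff_interface_matrix_invertible_general
    {n₁ n₂ m₁ m₂ : ℕ}
    (AΩ1 : Matrix (Fin n₁) (Fin n₁) ℝ) (AΩ2 : Matrix (Fin n₂) (Fin n₂) ℝ)
    (hA1 : IsUnit AΩ1.det) (hA2 : IsUnit AΩ2.det)
    (AΓ1 : Matrix (Fin n₁) (Fin m₁) ℝ) (AΓ2 : Matrix (Fin n₂) (Fin m₂) ℝ)
    (R21 : Matrix (Fin m₁) (Fin n₂) ℝ) (R12 : Matrix (Fin m₂) (Fin n₁) ℝ)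
    (S : Matrix ((Fin n₁ ⊕ Fin m₁) ⊕ (Fin n₂ ⊕ Fin m₂))
               ((Fin n₁ ⊕ Fin m₁) ⊕ (Fin n₂ ⊕ Fin m₂)) ℝ)
    (hS : S = Matrix.fromBlocks
        (Matrix.fromBlocks AΩ1 AΓ1 0 1)
        (Matrix.fromBlocks 0 0 (-R21) 0)
        (Matrix.fromBlocks 0 0 (-R12) 0)
        (Matrix.fromBlocks AΩ2 AΓ2 0 1))
    (M : Matrix (Fin m₁ ⊕ Fin m₂) (Fin m₁ ⊕ Fin m₂) ℝ)
    (hM : M = Matrix.fromBlocks 1 (R21 * AΩ2⁻¹ * AΓ2) (R12 * AΩ1⁻¹ * AΓ1) 1) :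
    (IsUnit S ↔ IsUnit M) ∧
    (IsUnit M ↔ IsUnit (1 - (R21 * AΩ2⁻¹ * AΓ2) * (R12 * AΩ1⁻¹ * AΓ1))) := by
  have hdetS : S.det = AΩ1.det * AΩ2.det * M.det :=
    hS ▸ hM ▸ det_blockSchwarz hA1 hA2 AΓ1 AΓ2 R21 R12
  have hdetM : M.det = (1 - (R21 * AΩ2⁻¹ * AΓ2) * (R12 * AΩ1⁻¹ * AΓ1)).det :=
    hM ▸ det_fromBlocks_one₂₂ _ _ _
  refine ⟨?_, ?_⟩
  · rw [isUnit_iff_isUnit_det S, hdetS, IsUnit.mul_iff, IsUnit.mul_iff, isUnit_iff_isUnit_det M]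
    exact ⟨And.right, fun hMdet => ⟨⟨hA1, hA2⟩, hMdet⟩⟩
  · rw [isUnit_iff_isUnit_det M, isUnit_iff_isUnit_det (1 - _), hdetM]

/-- The coefficient matrix of the block Schwarz system is invertible iff the interface
matrix `[[I, B₁], [B₂, I]]` is invertible, which in turn holds iff `I − B₁B₂` is
invertible. -/
theorem block_schwarz_matrix_invertible_iff_interface_matrix_invertible
    {n₁ n₂ m₁ m₂ : ℕ} (hn₁ : 0 < n₁) (hn₂ : 0 < n₂) (hm₁ : 0 < m₁) (hm₂ : 0 < m₂)
    (AΩ1 : Matrix (Fin n₁) (Fin n₁) ℝ) (AΩ2 : Matrix (Fin n₂) (Fin n₂) ℝ)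
    (hA1 : IsUnit AΩ1.det) (hA2 : IsUnit AΩ2.det)
    (AΓ1 : Matrix (Fin n₁) (Fin m₁) ℝ) (AΓ2 : Matrix (Fin n₂) (Fin m₂) ℝ)
    (R21 : Matrix (Fin m₁) (Fin n₂) ℝ) (R12 : Matrix (Fin m₂) (Fin n₁) ℝ)
    (S : Matrix ((Fin n₁ ⊕ Fin m₁) ⊕ (Fin n₂ ⊕ Fin m₂))
               ((Fin n₁ ⊕ Fin m₁) ⊕ (Fin n₂ ⊕ Fin m₂)) ℝ)
    (hS : S = Matrix.fromBlocks
        (Matrix.fromBlocks AΩ1 AΓ1 0 1)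
        (Matrix.fromBlocks 0 0 (-R21) 0)
        (Matrix.fromBlocks 0 0 (-R12) 0)
        (Matrix.fromBlocks AΩ2 AΓ2 0 1))
    (M : Matrix (Fin m₁ ⊕ Fin m₂) (Fin m₁ ⊕ Fin m₂) ℝ)
    (hM : M = Matrix.fromBlocks 1 (R21 * AΩ2⁻¹ * AΓ2) (R12 * AΩ1⁻¹ * AΓ1) 1) :
    (IsUnit S ↔ IsUnit M) ∧
    (IsUnit M ↔ IsUnit (1 - (R21 * AΩ2⁻¹ * AΓ2) * (R12 * AΩ1⁻¹ * AΓ1))) :=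
  block_schwarz_matrix_invertible_iff_interface_matrix_invertible_general AΩ1 AΩ2 hA1 hA2 AΓ1 AΓ2
    R21 R12 S hS M hM
end

section
/- Suppose the operator norm of T = B₁B₂, induced by some norm on ℝ^{m₁}, satisfies ‖T‖ < 1. Then the interface system has a unique solution (λ₁*, λ₂*), and for every initial guess λ₁^{(0)} ∈ ℝ^{m₁} the Schwarz iterates λ₁^{(k)} = Φ(λ₁^{(k−1)}) converge to λ₁* and the associated second components λ₂^{(k)} = b₂ − B₂λ₁^{(k)} converge to λ₂*. -/
/-!
Eliminating `λ₂ = b₂ - B₂ λ₁` turns the interface system into the fixed-point equation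
`Φ λ₁ = λ₁`, and `Φ λ = (b₁ - B₁ b₂) + T λ` is affine with linear part `T = B₁ B₂`.
Since `ν (T x) ≤ C ν x` with `C < 1`, `1 - T` is injective, hence bijective in finite
dimension, so `Φ` has exactly one fixed point `p`. The error after `k` sweeps is
`T ^ k (λ₁⁽⁰⁾ - p)`, whose `ν`-size decays like `C ^ k`; as a definite seminorm on a
finite-dimensional space, `ν` bounds a multiple of the sup norm, which gives convergence.
-/

open Matrix Filter Topology Function

namespace Seminorm

section Norm

variable {E : Type*} [NormedAddCommGroup E] [NormedSpace ℝ E] [FiniteDimensional ℝ E]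
  {ν : Seminorm ℝ E}

theorem continuous_of_finiteDimensional (ν : Seminorm ℝ E) : Continuous ν :=
  continuousOn_univ.mp (ν.convexOn.continuousOn isOpen_univ)

-- A definite seminorm attains a positive minimum on the (compact) unit sphere.
theorem exists_pos_mul_norm_le (hν : ∀ x, ν x = 0 → x = 0) : ∃ c > 0, ∀ x, c * ‖x‖ ≤ ν x := by
  rcases subsingleton_or_nontrivial E with _ | _
  · exact ⟨1, one_pos, fun x => by simp [Subsingleton.elim x 0]⟩
  obtain ⟨z, hz, hmin⟩ := (isCompact_sphere (0 : E) 1).exists_isMinOn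
    (NormedSpace.sphere_nonempty.2 zero_le_one) ν.continuous_of_finiteDimensional.continuousOn
  have hz1 : ‖z‖ = 1 := by simpa using hz
  refine ⟨ν z, (apply_nonneg ν z).lt_of_ne' fun h => by simp [hν z h] at hz1, fun x => ?_⟩
  rcases eq_or_ne x 0 with rfl | hx
  · simp
  have hnx : 0 < ‖x‖ := norm_pos_iff.mpr hx
  have hmem : ‖x‖⁻¹ • x ∈ Metric.sphere (0 : E) 1 := by
    simp [norm_smul, hnx.ne']
  have := hmin hmem
  simp only [Set.mem_ofPred_eq, map_smul_eq_mul, norm_inv, norm_norm] at this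
  rwa [le_inv_mul_iff₀ hnx, mul_comm] at this

theorem tendsto_of_tendsto_sub (hν : ∀ x, ν x = 0 → x = 0) {ι : Type*} {l : Filter ι}
    {u : ι → E} {a : E} (hu : Tendsto (fun i => ν (u i - a)) l (𝓝 0)) : Tendsto u l (𝓝 a) := by
  obtain ⟨c, hc, hle⟩ := exists_pos_mul_norm_le hν
  rw [tendsto_iff_norm_sub_tendsto_zero]
  refine squeeze_zero (fun _ => norm_nonneg _) (fun i => ?_) (by simpa using hu.div_const c)
  rw [le_div_iff₀ hc, mul_comm]
  exact hle _

end Norm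

section Contraction

variable {E : Type*} [AddCommGroup E] [Module ℝ E] {ν : Seminorm ℝ E} {T : E →ₗ[ℝ] E} {C : ℝ}

theorem apply_pow_apply_le (hT : ∀ x, ν (T x) ≤ C * ν x) (k : ℕ) (x : E) :
    ν ((T ^ k) x) ≤ max C 0 ^ k * ν x := by
  induction k with
  | zero => simp
  | succ k ih =>
    calc ν ((T ^ (k + 1)) x) = ν (T ((T ^ k) x)) := by rw [pow_succ', Module.End.mul_apply]
      _ ≤ max C 0 * ν ((T ^ k) x) :=
          (hT _).trans (mul_le_mul_of_nonneg_right (le_max_left _ _) (apply_nonneg _ _))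
      _ ≤ max C 0 * (max C 0 ^ k * ν x) := mul_le_mul_of_nonneg_left ih (le_max_right _ _)
      _ = max C 0 ^ (k + 1) * ν x := by ring

theorem tendsto_apply_pow_apply (hT : ∀ x, ν (T x) ≤ C * ν x) (hC : C < 1) (x : E) :
    Tendsto (fun k => ν ((T ^ k) x)) atTop (𝓝 0) := by
  have hgeo : Tendsto (fun k => max C 0 ^ k * ν x) atTop (𝓝 0) := by
    simpa using (tendsto_pow_atTop_nhds_zero_of_lt_one (le_max_right C 0)
      (max_lt hC one_pos)).mul_const (ν x)
  exact squeeze_zero (fun _ => apply_nonneg _ _) (apply_pow_apply_le hT · x) hgeo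

theorem injective_one_sub (hν : ∀ x, ν x = 0 → x = 0) (hT : ∀ x, ν (T x) ≤ C * ν x)
    (hC : C < 1) : Injective ((LinearMap.id : E →ₗ[ℝ] E) - T) := by
  rw [← LinearMap.ker_eq_bot, LinearMap.ker_eq_bot']
  intro x hx
  have hfix : T x = x := (sub_eq_zero.mp hx).symm
  have hle : ν x ≤ C * ν x := by simpa only [hfix] using hT x
  exact hν x (by nlinarith [apply_nonneg ν x])

end Contraction

variable {E : Type*} [NormedAddCommGroup E] [NormedSpace ℝ E] [FiniteDimensional ℝ E]
  {ν : Seminorm ℝ E} {T : E →ₗ[ℝ] E} {C : ℝ}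

-- Finite dimension turns injectivity of `1 - T` into the existence of the fixed point.
theorem exists_isFixedPt_tendsto_iterate (hν : ∀ x, ν x = 0 → x = 0)
    (hT : ∀ x, ν (T x) ≤ C * ν x) (hC : C < 1) (b : E) :
    ∃ p, IsFixedPt (fun x => b + T x) p ∧
      ∀ x₀, Tendsto (fun k => (fun x => b + T x)^[k] x₀) atTop (𝓝 p) := by
  obtain ⟨p, hp⟩ := LinearMap.injective_iff_surjective.mp (injective_one_sub hν hT hC) b
  have hfix : b + T p = p := by
    rw [← hp]
    simp
  have herr : ∀ x₀ k, (fun x => b + T x)^[k] x₀ - p = (T ^ k) (x₀ - p) := by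
    intro x₀ k
    induction k with
    | zero => simp
    | succ k ih =>
      rw [iterate_succ_apply', pow_succ', Module.End.mul_apply, ← ih, map_sub]
      conv_lhs => rw [← hfix]
      abel
  refine ⟨p, hfix, fun x₀ => tendsto_of_tendsto_sub hν ?_⟩
  simpa only [herr] using tendsto_apply_pow_apply hT hC (x₀ - p)

end Seminorm

section Interface

variable {R m₁ m₂ : Type*} [CommRing R] [Fintype m₁] [Fintype m₂]
  (B₁ : Matrix m₁ m₂ R) (B₂ : Matrix m₂ m₁ R) (b₁ : m₁ → R) (b₂ : m₂ → R)

def schwarzSweep (l : m₁ → R) : m₁ → R := b₁ - B₁ *ᵥ (b₂ - B₂ *ᵥ l)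

theorem schwarzSweep_eq_add_mulVec (l : m₁ → R) :
    schwarzSweep B₁ B₂ b₁ b₂ l = (b₁ - B₁ *ᵥ b₂) + (B₁ * B₂) *ᵥ l := by
  rw [schwarzSweep, mulVec_sub, ← mulVec_mulVec]
  abel

theorem interface_system_iff (l₁ : m₁ → R) (l₂ : m₂ → R) :
    (l₁ + B₁ *ᵥ l₂ = b₁ ∧ B₂ *ᵥ l₁ + l₂ = b₂) ↔
      l₂ = b₂ - B₂ *ᵥ l₁ ∧ IsFixedPt (schwarzSweep B₁ B₂ b₁ b₂) l₁ := by
  constructor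
  · rintro ⟨h₁, h₂⟩
    obtain rfl : l₂ = b₂ - B₂ *ᵥ l₁ := eq_sub_of_add_eq' h₂
    exact ⟨rfl, sub_eq_of_eq_add h₁.symm⟩
  · rintro ⟨rfl, h⟩
    exact ⟨(sub_eq_iff_eq_add.mp h).symm, add_sub_cancel _ _⟩

end Interface

theorem schwarz_iterates_converge_of_contraction_general
    {m₁ m₂ : ℕ}
    (B₁ : Matrix (Fin m₁) (Fin m₂) ℝ)
    (B₂ : Matrix (Fin m₂) (Fin m₁) ℝ)
    (b₁ : Fin m₁ → ℝ)
    (b₂ : Fin m₂ → ℝ)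
    (Φ : (Fin m₁ → ℝ) → (Fin m₁ → ℝ)) (hΦ : Φ = fun l₁ => b₁ - B₁ *ᵥ (b₂ - B₂ *ᵥ l₁))
    (ν : Seminorm ℝ (Fin m₁ → ℝ)) (hν : ∀ x, ν x = 0 → x = 0)
    (C : ℝ) (hC : C < 1) (hop : ∀ x, ν ((B₁ * B₂) *ᵥ x) ≤ C * ν x) :
    ∃ (lstar₁ : Fin m₁ → ℝ) (lstar₂ : Fin m₂ → ℝ),
      (lstar₁ + B₁ *ᵥ lstar₂ = b₁ ∧ B₂ *ᵥ lstar₁ + lstar₂ = b₂) ∧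
      (∀ (l₁ : Fin m₁ → ℝ) (l₂ : Fin m₂ → ℝ),
        (l₁ + B₁ *ᵥ l₂ = b₁ ∧ B₂ *ᵥ l₁ + l₂ = b₂) → l₁ = lstar₁ ∧ l₂ = lstar₂) ∧
      (∀ l₁0 : Fin m₁ → ℝ,
        Filter.Tendsto (fun k => Φ^[k] l₁0) Filter.atTop (nhds lstar₁) ∧
        Filter.Tendsto (fun k => b₂ - B₂ *ᵥ Φ^[k] l₁0) Filter.atTop (nhds lstar₂)) := by
  obtain rfl : Φ = schwarzSweep B₁ B₂ b₁ b₂ := hΦ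
  obtain ⟨p, hfix, hconv⟩ :=
    Seminorm.exists_isFixedPt_tendsto_iterate (T := (B₁ * B₂).mulVecLin) hν hop hC
      (b₁ - B₁ *ᵥ b₂)
  simp only [mulVecLin_apply, ← schwarzSweep_eq_add_mulVec] at hfix hconv
  have hsecond : Continuous fun l => b₂ - B₂ *ᵥ l := by fun_prop
  refine ⟨p, b₂ - B₂ *ᵥ p, (interface_system_iff B₁ B₂ b₁ b₂ _ _).2 ⟨rfl, hfix⟩, ?_,
    fun l₀ => ⟨hconv l₀, (hsecond.tendsto p).comp (hconv l₀)⟩⟩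
  rintro l₁ l₂ hsolves
  obtain ⟨rfl, hl₁⟩ := (interface_system_iff B₁ B₂ b₁ b₂ l₁ l₂).1 hsolves
  obtain rfl : l₁ = p := tendsto_const_nhds_iff.mp ((hconv l₁).congr (iterate_fixed hl₁))
  exact ⟨rfl, rfl⟩

/-- If the operator norm of `T = B₁B₂` induced by some norm on `ℝ^{m₁}` is `< 1`, then the
interface system has a unique solution `(λ₁*, λ₂*)`, the Schwarz iterates converge to
`λ₁*` from any initial guess, and the associated second components converge to `λ₂*`. -/
theorem schwarz_iterates_converge_of_contraction
    {n₁ n₂ m₁ m₂ : ℕ} (hn₁ : 0 < n₁) (hn₂ : 0 < n₂) (hm₁ : 0 < m₁) (hm₂ : 0 < m₂)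
    (AΩ1 : Matrix (Fin n₁) (Fin n₁) ℝ) (AΩ2 : Matrix (Fin n₂) (Fin n₂) ℝ)
    (hA1 : IsUnit AΩ1.det) (hA2 : IsUnit AΩ2.det)
    (AΓ1 : Matrix (Fin n₁) (Fin m₁) ℝ) (AΓ2 : Matrix (Fin n₂) (Fin m₂) ℝ)
    (R21 : Matrix (Fin m₁) (Fin n₂) ℝ) (R12 : Matrix (Fin m₂) (Fin n₁) ℝ)
    (f₁ : Fin n₁ → ℝ) (f₂ : Fin n₂ → ℝ)
    (B₁ : Matrix (Fin m₁) (Fin m₂) ℝ) (hB₁ : B₁ = R21 * AΩ2⁻¹ * AΓ2)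
    (B₂ : Matrix (Fin m₂) (Fin m₁) ℝ) (hB₂ : B₂ = R12 * AΩ1⁻¹ * AΓ1)
    (b₁ : Fin m₁ → ℝ) (hb₁ : b₁ = (R21 * AΩ2⁻¹) *ᵥ f₂)
    (b₂ : Fin m₂ → ℝ) (hb₂ : b₂ = (R12 * AΩ1⁻¹) *ᵥ f₁)
    (Φ : (Fin m₁ → ℝ) → (Fin m₁ → ℝ)) (hΦ : Φ = fun l₁ => b₁ - B₁ *ᵥ (b₂ - B₂ *ᵥ l₁))
    (ν : Seminorm ℝ (Fin m₁ → ℝ)) (hν : ∀ x, ν x = 0 → x = 0)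
    (C : ℝ) (hC : C < 1) (hop : ∀ x, ν ((B₁ * B₂) *ᵥ x) ≤ C * ν x) :
    ∃ (lstar₁ : Fin m₁ → ℝ) (lstar₂ : Fin m₂ → ℝ),
      (lstar₁ + B₁ *ᵥ lstar₂ = b₁ ∧ B₂ *ᵥ lstar₁ + lstar₂ = b₂) ∧
      (∀ (l₁ : Fin m₁ → ℝ) (l₂ : Fin m₂ → ℝ),
        (l₁ + B₁ *ᵥ l₂ = b₁ ∧ B₂ *ᵥ l₁ + l₂ = b₂) → l₁ = lstar₁ ∧ l₂ = lstar₂) ∧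
      (∀ l₁0 : Fin m₁ → ℝ,
        Filter.Tendsto (fun k => Φ^[k] l₁0) Filter.atTop (nhds lstar₁) ∧
        Filter.Tendsto (fun k => b₂ - B₂ *ᵥ Φ^[k] l₁0) Filter.atTop (nhds lstar₂)) :=
  schwarz_iterates_converge_of_contraction_general B₁ B₂ b₁ b₂ Φ hΦ ν hν C hC hop
end
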